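/- arXiv:1902.04715 — 12 statements merged into one kernel-verified Lean document; each statement's English description precedes it below -/
import Mathlib

section
/- Let f = (f₁,…,fₙ) be a polynomial vector field on ℝⁿ whose components all have total degree at most 2, let P be an affine polynomial (total degree at most 1) and C a polynomial such that ∑ᵢ fᵢ·∂P/∂xᵢ = C·P, and let h be a real number. Then for every point x ∈ ℝⁿ such that the matrix A(x) = I − (h/2)·Df(x) is invertible (where Df(x) is the Jacobian matrix of f at x) and P(x) = 0, the Kahan update Φ(x) = x + h·A(x)⁻¹·f(x) satisfies P(Φ(x)) = 0. In other words, the Kahan–Hirota–Kimura discretization preserves every affine Darboux polynomial of a quadratic ODE. -/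
open MvPolynomial Matrix

/-!
Let `g` be the (constant) gradient of the affine polynomial `P`. Differentiating the Darboux
relation `∑ i, fᵢ gᵢ = C P` and evaluating at a zero `x` of `P` gives `g ⬝ f(x) = 0` and
`gᵀ Df(x) = C(x) gᵀ`. So `g` is a left eigenvector of `A(x) = I - (h/2) Df(x)`, hence also of
`A(x)⁻¹`, and `g ⬝ A(x)⁻¹ f(x)` is a multiple of `g ⬝ f(x) = 0`. Since `P` is affine,
`P(Φ(x)) = P(x) + h (g ⬝ A(x)⁻¹ f(x)) = 0`.
-/

namespace MvPolynomial

variable {σ R : Type*} [Fintype σ] [CommSemiring R]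

noncomputable def linearCoeffs (P : MvPolynomial σ R) : σ → R :=
  fun i => coeff (Finsupp.single i 1) P

theorem eq_C_add_sum_linearCoeffs_of_totalDegree_le_one {P : MvPolynomial σ R}
    (hP : P.totalDegree ≤ 1) :
    P = C (coeff 0 P) + ∑ i, C (linearCoeffs P i) * X i := by
  classical
  ext m
  simp only [coeff_add, coeff_C, coeff_sum, coeff_C_mul, coeff_X, linearCoeffs, mul_ite, mul_one,
    mul_zero]
  obtain rfl | ⟨j, rfl⟩ | hm : m = 0 ∨ (∃ j, m = Finsupp.single j 1) ∨ 1 < m.degree := by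
    rcases Nat.lt_or_ge m.degree 2 with hm | hm
    · interval_cases hd : m.degree
      · exact .inl ((Finsupp.degree_eq_zero_iff m).mp hd)
      · exact .inr (.inl ((Finsupp.sum_eq_one_iff m).mp hd))
    · exact .inr (.inr hm)
  · simp
  · simp [Finsupp.single_left_inj, eq_comm (a := (0 : σ →₀ ℕ))]
  · have hne : ∀ i, Finsupp.single i 1 ≠ m := fun i hi => by simp [← hi] at hm
    have hm0 : 0 ≠ m := fun h => by simp [← h] at hm
    simp [hne, hm0, coeff_eq_zero_of_totalDegree_lt (hP.trans_lt hm)]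

theorem pderiv_eq_C_linearCoeffs_of_totalDegree_le_one {P : MvPolynomial σ R}
    (hP : P.totalDegree ≤ 1) (i : σ) : pderiv i P = C (linearCoeffs P i) := by
  classical
  conv_lhs => rw [eq_C_add_sum_linearCoeffs_of_totalDegree_le_one hP]
  simp [pderiv_X, Pi.single_apply]

theorem eval_eq_of_totalDegree_le_one {P : MvPolynomial σ R} (hP : P.totalDegree ≤ 1)
    (x : σ → R) : eval x P = coeff 0 P + linearCoeffs P ⬝ᵥ x := by
  conv_lhs => rw [eq_C_add_sum_linearCoeffs_of_totalDegree_le_one hP]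
  simp [dotProduct]

theorem eval_add_of_totalDegree_le_one {P : MvPolynomial σ R} (hP : P.totalDegree ≤ 1)
    (x v : σ → R) : eval (x + v) P = eval x P + linearCoeffs P ⬝ᵥ v := by
  rw [eval_eq_of_totalDegree_le_one hP, eval_eq_of_totalDegree_le_one hP, dotProduct_add,
    add_assoc]

noncomputable def jacobianAt (f : σ → MvPolynomial σ R) (x : σ → R) : Matrix σ σ R :=
  of fun i j => eval x (pderiv j (f i))

section Darboux

variable {f : σ → MvPolynomial σ R} {P Q : MvPolynomial σ R} {x : σ → R}

theorem linearCoeffs_dotProduct_eval_eq_zero_of_darboux (hP : P.totalDegree ≤ 1)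
    (hDarb : ∑ i, f i * pderiv i P = Q * P) (hx : eval x P = 0) :
    linearCoeffs P ⬝ᵥ (fun i => eval x (f i)) = 0 := by
  have h := congrArg (eval x) hDarb
  simp only [eval_sum, eval_mul, pderiv_eq_C_linearCoeffs_of_totalDegree_le_one hP, eval_C, hx,
    mul_zero] at h
  simpa [dotProduct, mul_comm] using h

theorem linearCoeffs_vecMul_jacobianAt_of_darboux (hP : P.totalDegree ≤ 1)
    (hDarb : ∑ i, f i * pderiv i P = Q * P) (hx : eval x P = 0) :
    linearCoeffs P ᵥ* jacobianAt f x = eval x Q • linearCoeffs P := by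
  ext j
  have h := congrArg (fun q => eval x (pderiv j q)) hDarb
  simp only [map_sum, pderiv_mul, pderiv_eq_C_linearCoeffs_of_totalDegree_le_one hP, pderiv_C,
    mul_zero, add_zero, eval_add, eval_mul, eval_C, hx, zero_add] at h
  simpa [vecMul, dotProduct, jacobianAt, mul_comm] using h

end Darboux

end MvPolynomial

namespace Matrix

variable {n R K : Type*} [Fintype n] [DecidableEq n] [CommRing R] [Field K]

theorem vecMul_one_sub_smul_of_vecMul_eq_smul {J : Matrix n n R} {g : n → R} {c : R} (t : R)
    (hg : g ᵥ* J = c • g) : g ᵥ* (1 - t • J) = (1 - t * c) • g := by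
  rw [vecMul_sub, vecMul_one, vecMul_smul, hg, smul_smul, sub_smul, one_smul]

-- For `μ = 0` invertibility forces `g = 0`, so the junk value `0⁻¹ = 0` is harmless.
theorem vecMul_nonsing_inv_of_vecMul_eq_smul {A : Matrix n n K} {g : n → K} {μ : K}
    (hA : IsUnit A.det) (hg : g ᵥ* A = μ • g) : g ᵥ* A⁻¹ = μ⁻¹ • g := by
  have hμg : μ • (g ᵥ* A⁻¹) = g := by
    rw [← smul_vecMul, ← hg, vecMul_vecMul, mul_nonsing_inv A hA, vecMul_one]
  rcases eq_or_ne μ 0 with rfl | hμ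
  · obtain rfl : g = 0 := by rw [← hμg, zero_smul]
    simp
  · rw [← inv_smul_smul₀ hμ (g ᵥ* A⁻¹), hμg]

theorem dotProduct_nonsing_inv_mulVec_eq_zero {A : Matrix n n K} {g v : n → K} {μ : K}
    (hA : IsUnit A.det) (hg : g ᵥ* A = μ • g) (hv : g ⬝ᵥ v = 0) : g ⬝ᵥ (A⁻¹ *ᵥ v) = 0 := by
  rw [dotProduct_mulVec, vecMul_nonsing_inv_of_vecMul_eq_smul hA hg, smul_dotProduct, hv,
    smul_zero]

end Matrix

theorem kahan_preserves_affine_darboux_polynomials_general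
    (n : ℕ) (f : Fin n → MvPolynomial (Fin n) ℝ)
    (P C : MvPolynomial (Fin n) ℝ) (hPaff : P.totalDegree ≤ 1)
    (hDarb : ∑ i, f i * pderiv i P = C * P)
    (h : ℝ) (x : Fin n → ℝ)
    (A : Matrix (Fin n) (Fin n) ℝ)
    (hA : A = 1 - (h / 2) • Matrix.of fun i j => eval x (pderiv j (f i)))
    (hAinv : IsUnit A.det)
    (hx : eval x P = 0) :
    eval (x + h • (A⁻¹ *ᵥ fun i => eval x (f i))) P = 0 := by
  have hgA : linearCoeffs P ᵥ* A = (1 - h / 2 * eval x C) • linearCoeffs P := by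
    rw [hA]
    exact vecMul_one_sub_smul_of_vecMul_eq_smul _
      (linearCoeffs_vecMul_jacobianAt_of_darboux hPaff hDarb hx)
  rw [eval_add_of_totalDegree_le_one hPaff, hx, dotProduct_smul,
    dotProduct_nonsing_inv_mulVec_eq_zero hAinv hgA
      (linearCoeffs_dotProduct_eval_eq_zero_of_darboux hPaff hDarb hx),
    smul_zero, zero_add]

/-- The Kahan–Hirota–Kimura discretization preserves every affine Darboux
polynomial of a quadratic ODE. -/
theorem kahan_preserves_affine_darboux_polynomials
    (n : ℕ) (f : Fin n → MvPolynomial (Fin n) ℝ)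
    (hf : ∀ i, (f i).totalDegree ≤ 2)
    (P C : MvPolynomial (Fin n) ℝ) (hPaff : P.totalDegree ≤ 1)
    (hDarb : ∑ i, f i * pderiv i P = C * P)
    (h : ℝ) (x : Fin n → ℝ)
    (A : Matrix (Fin n) (Fin n) ℝ)
    (hA : A = 1 - (h / 2) • Matrix.of fun i j => eval x (pderiv j (f i)))
    (hAinv : IsUnit A.det)
    (hx : eval x P = 0) :
    eval (x + h • (A⁻¹ *ᵥ fun i => eval x (f i))) P = 0 :=
  kahan_preserves_affine_darboux_polynomials_general n f P C hPaff hDarb h x A hA hAinv hx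
end

section
/- Let f = (f₁,…,fₙ) be a polynomial vector field on ℝⁿ and let P₁, P₂, C be polynomials with ∑ᵢ fᵢ·∂P₁/∂xᵢ = C·P₁ and ∑ᵢ fᵢ·∂P₂/∂xᵢ = C·P₂ (two Darboux polynomials with the same cofactor). Then for any differentiable curve x : I → ℝⁿ on an interval I satisfying x'(t) = f(x(t)) for all t ∈ I and with P₂(x(t)) ≠ 0 for all t ∈ I, the function t ↦ P₁(x(t))/P₂(x(t)) is constant on I; i.e. the ratio P₁/P₂ is a rational first integral of the ODE ẋ = f(x). -/
/-!
Along a solution of `ẋ = f(x)`, the chain rule turns the Darboux identity into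
`d/dt P(x(t)) = C(x(t)) · P(x(t))`. Numerator and denominator thus solve the same scalar linear
equation, so the quotient rule gives the ratio derivative zero, and a function with zero
derivative on an interval is constant.
-/

open MvPolynomial

section

variable {𝕜 σ : Type*} [NontriviallyNormedField 𝕜] [Fintype σ] [DecidableEq σ]

theorem HasDerivAt.mvPolynomial_eval {x : 𝕜 → σ → 𝕜} {x' : σ → 𝕜} {t : 𝕜}
    (hx : HasDerivAt x x' t) (P : MvPolynomial σ 𝕜) :
    HasDerivAt (fun s => eval (x s) P) (∑ i, x' i * eval (x t) (pderiv i P)) t := by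
  induction P using MvPolynomial.induction_on with
  | C a => simpa using hasDerivAt_const t a
  | add p q hp hq => simpa [mul_add, Finset.sum_add_distrib] using hp.fun_add hq
  | mul_X p i hp =>
    have leibniz : ∑ j, x' j * eval (x t) (pderiv j (p * X i)) =
        (∑ j, x' j * eval (x t) (pderiv j p)) * x t i + eval (x t) p * x' i := by
      simp only [pderiv_mul, pderiv_X, map_add, map_mul, eval_X, mul_add, Finset.sum_add_distrib,
        Finset.sum_mul, mul_assoc]
      congr 1
      simp [Pi.single_apply, mul_comm]
    simp only [map_mul, eval_X, leibniz]
    exact hp.fun_mul (hasDerivAt_pi.mp hx i)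

def IsDarbouxPolynomial {R : Type*} [CommSemiring R] (f : σ → MvPolynomial σ R)
    (P C : MvPolynomial σ R) : Prop :=
  ∑ i, f i * pderiv i P = C * P

theorem IsDarbouxPolynomial.hasDerivAt_eval {f : σ → MvPolynomial σ 𝕜} {P C : MvPolynomial σ 𝕜}
    (hP : IsDarbouxPolynomial f P C) {x : 𝕜 → σ → 𝕜} {t : 𝕜}
    (hx : HasDerivAt x (fun i => eval (x t) (f i)) t) :
    HasDerivAt (fun s => eval (x s) P) (eval (x t) C * eval (x t) P) t := by
  unfold IsDarbouxPolynomial at hP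
  simpa [← map_mul, ← hP] using hx.mvPolynomial_eval P

theorem HasDerivAt.fun_div_zero_of_same_rate {g h : 𝕜 → 𝕜} {c t : 𝕜}
    (hg : HasDerivAt g (c * g t) t) (hh : HasDerivAt h (c * h t) t) (ht : h t ≠ 0) :
    HasDerivAt (fun s => g s / h s) 0 t := by
  have hdiv := hg.fun_div hh ht
  rwa [show (c * g t * h t - g t * (c * h t)) / h t ^ 2 = 0 by ring] at hdiv

end

theorem Set.OrdConnected.eq_of_hasDerivAt_eq_zero {E : Type*} [NormedAddCommGroup E]
    [NormedSpace ℝ E] {I : Set ℝ} (hI : I.OrdConnected) {g : ℝ → E}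
    (hg : ∀ t ∈ I, HasDerivAt g 0 t) {s t : ℝ} (hs : s ∈ I) (ht : t ∈ I) : g s = g t := by
  have := hI.convex.norm_image_sub_le_of_norm_hasDerivWithin_le (C := 0)
    (fun u hu => (hg u hu).hasDerivWithinAt) (fun _ _ => by simp) hs ht
  simpa [sub_eq_zero, eq_comm] using this

/-- The ratio of two Darboux polynomials of a polynomial vector field with the
same cofactor is a rational first integral: it is constant along any solution
curve on which the denominator does not vanish. -/
theorem ratio_of_darboux_polynomials_is_first_integral
    (n : ℕ) (f : Fin n → MvPolynomial (Fin n) ℝ)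
    (P₁ P₂ C : MvPolynomial (Fin n) ℝ)
    (h1 : ∑ i, f i * pderiv i P₁ = C * P₁)
    (h2 : ∑ i, f i * pderiv i P₂ = C * P₂)
    (I : Set ℝ) (hI : I.OrdConnected)
    (x : ℝ → Fin n → ℝ)
    (hx : ∀ t ∈ I, HasDerivAt x (fun i => eval (x t) (f i)) t)
    (hP₂ : ∀ t ∈ I, eval (x t) P₂ ≠ 0) :
    ∀ s ∈ I, ∀ t ∈ I,
      eval (x s) P₁ / eval (x s) P₂ = eval (x t) P₁ / eval (x t) P₂ := by
  have hratio : ∀ t ∈ I, HasDerivAt (fun s => eval (x s) P₁ / eval (x s) P₂) 0 t :=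
    fun t ht => HasDerivAt.fun_div_zero_of_same_rate
      (IsDarbouxPolynomial.hasDerivAt_eval h1 (hx t ht))
      (IsDarbouxPolynomial.hasDerivAt_eval h2 (hx t ht)) (hP₂ t ht)
  exact fun s hs t ht => hI.eq_of_hasDerivAt_eq_zero hratio hs ht
end

section
/- Let f = (f₁,…,fₙ) be a polynomial vector field on ℝⁿ and let P, C be polynomials with ∑ᵢ fᵢ·∂P/∂xᵢ = C·P. Let x : I → ℝⁿ be a differentiable curve on an interval I containing 0 with x'(t) = f(x(t)) for all t ∈ I. If P(x(0)) = 0, then P(x(t)) = 0 for all t ∈ I; i.e. the zero set of a Darboux polynomial is an invariant set of the flow. -/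
/-!
By the chain rule and the Darboux identity, `y(t) = P(x(t))` solves the scalar linear equation
`y' = C(x(t)) y`. Its coefficient is continuous, hence bounded on every compact time interval,
so Grönwall's inequality forces a solution vanishing at `t = 0` to vanish identically.
-/

open MvPolynomial Set

theorem MvPolynomial.hasDerivAt_eval_comp {σ : Type*} [Fintype σ] {x : ℝ → σ → ℝ}
    {x' : σ → ℝ} {t : ℝ} (hx : HasDerivAt x x' t) (P : MvPolynomial σ ℝ) :
    HasDerivAt (fun s => eval (x s) P) (∑ i, x' i * eval (x t) (pderiv i P)) t := by
  classical
  induction P using MvPolynomial.induction_on with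
  | C a => simpa using hasDerivAt_const t a
  | add p q hp hq =>
    simp only [map_add, mul_add, Finset.sum_add_distrib]
    exact hp.add hq
  | mul_X p i hp =>
    have hxi : HasDerivAt (fun s => x s i) (x' i) t := hasDerivAt_pi.mp hx i
    simp only [eval_mul, eval_X]
    refine (hp.mul hxi).congr_deriv ?_
    simp only [pderiv_mul, pderiv_X, eval_add, eval_mul, eval_X, mul_add, Finset.sum_add_distrib,
      Finset.sum_mul]
    congr 1
    · exact Finset.sum_congr rfl fun j _ => by ring
    · rw [Fintype.sum_eq_single i fun j hj => by simp [Pi.single_eq_of_ne hj.symm]]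
      simp [mul_comm]

section LinearODE

variable {E : Type*} [NormedAddCommGroup E] [NormedSpace ℝ E] {y : ℝ → E} {c : ℝ → ℝ}

theorem eq_zero_of_hasDerivAt_smul_self_of_eq_zero_right {a b : ℝ}
    (hc : ContinuousOn c (Icc a b)) (hy : ∀ s ∈ Icc a b, HasDerivAt y (c s • y s) s)
    (ha : y a = 0) : ∀ s ∈ Icc a b, y s = 0 := by
  obtain ⟨K, hK⟩ := isCompact_Icc.exists_bound_of_continuousOn hc
  refine eq_zero_of_abs_deriv_le_mul_abs_self_of_eq_zero_right (K := K)
    (fun s hs => (hy s hs).continuousAt.continuousWithinAt)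
    (fun s hs => (hy s (Ico_subset_Icc_self hs)).hasDerivWithinAt) ha fun s hs => ?_
  rw [norm_smul]
  exact mul_le_mul_of_nonneg_right (hK s (Ico_subset_Icc_self hs)) (norm_nonneg _)

theorem eq_zero_of_hasDerivAt_smul_self_of_eq_zero_left {a b : ℝ}
    (hc : ContinuousOn c (Icc a b)) (hy : ∀ s ∈ Icc a b, HasDerivAt y (c s • y s) s)
    (hb : y b = 0) : ∀ s ∈ Icc a b, y s = 0 := by
  have hmem : ∀ s, s ∈ Icc (-b) (-a) ↔ -s ∈ Icc a b := fun s => by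
    simp only [mem_Icc, neg_le, le_neg, and_comm]
  -- reverse time: `s ↦ y (-s)` solves the equation with coefficient `s ↦ -c (-s)`
  have hrev := eq_zero_of_hasDerivAt_smul_self_of_eq_zero_right (y := fun s => y (-s))
    (c := fun s => -c (-s)) (a := -b) (b := -a)
    (hc.comp continuousOn_neg fun s hs => (hmem s).1 hs).neg
    (fun s hs => by
      simpa [neg_smul, Function.comp_def] using
        (hy (-s) ((hmem s).1 hs)).scomp s (hasDerivAt_neg s))
    (by simpa using hb)
  intro s hs
  simpa using hrev (-s) ((hmem (-s)).2 (by simpa using hs))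

theorem Set.OrdConnected.eq_zero_of_hasDerivAt_smul_self {I : Set ℝ} (hI : I.OrdConnected)
    (hc : ContinuousOn c I) (hy : ∀ s ∈ I, HasDerivAt y (c s • y s) s) {t₀ : ℝ} (ht₀ : t₀ ∈ I)
    (hy₀ : y t₀ = 0) : ∀ t ∈ I, y t = 0 := by
  intro t ht
  rcases le_total t₀ t with h | h
  · have hsub := hI.out ht₀ ht
    exact eq_zero_of_hasDerivAt_smul_self_of_eq_zero_right (hc.mono hsub)
      (fun s hs => hy s (hsub hs)) hy₀ t (right_mem_Icc.2 h)
  · have hsub := hI.out ht ht₀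
    exact eq_zero_of_hasDerivAt_smul_self_of_eq_zero_left (hc.mono hsub)
      (fun s hs => hy s (hsub hs)) hy₀ t (left_mem_Icc.2 h)

end LinearODE

/-- The zero set of a Darboux polynomial of a polynomial vector field is an
invariant set of the flow: if `P` vanishes at the initial point of a solution
curve, it vanishes along the whole curve. -/
theorem darboux_polynomial_zero_set_invariant
    (n : ℕ) (f : Fin n → MvPolynomial (Fin n) ℝ)
    (P C : MvPolynomial (Fin n) ℝ)
    (hDarb : ∑ i, f i * pderiv i P = C * P)
    (I : Set ℝ) (hI : I.OrdConnected) (h0 : (0 : ℝ) ∈ I)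
    (x : ℝ → Fin n → ℝ)
    (hx : ∀ t ∈ I, HasDerivAt x (fun i => eval (x t) (f i)) t)
    (hinit : eval (x 0) P = 0) :
    ∀ t ∈ I, eval (x t) P = 0 := by
  have hC : ContinuousOn (fun s => eval (x s) C) I := fun s hs =>
    ((continuous_eval C).continuousAt.comp (hx s hs).continuousAt).continuousWithinAt
  have hP : ∀ s ∈ I, HasDerivAt (fun s => eval (x s) P) (eval (x s) C • eval (x s) P) s := by
    intro s hs
    convert hasDerivAt_eval_comp (hx s hs) P using 1
    simpa [map_sum] using (congrArg (eval (x s)) hDarb).symm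
  exact hI.eq_zero_of_hasDerivAt_smul_self hC hP h0 hinit
end

section
/- Let U ⊆ ℝⁿ be an open set, let φ : U → ℝⁿ be an injective map that is differentiable on U with φ(U) ⊆ U, and let P : ℝⁿ → ℝ be a continuous function with P(x) > 0 for all x ∈ U. Suppose P(φ(x)) = det(Dφ(x))·P(x) for all x ∈ U, where Dφ(x) denotes the (Fréchet) derivative of φ at x. Then the measure with density 1/P with respect to Lebesgue measure is preserved by φ: for every measurable set s ⊆ U, ∫_{φ(s)} 1/P(x) dx = ∫_s 1/P(x) dx. In other words, a discrete Darboux polynomial whose cofactor equals the Jacobian determinant of the map is the inverse density of a preserved measure. -/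
/-!
By the change of variables formula, `∫_{φ(s)} g = ∫_s |det Dφ| · g ∘ φ` for injective
differentiable `φ`, so a density `g` is preserved as soon as `|det Dφ| · g ∘ φ = g` on `s`.
For `g = 1/P` this is the Darboux relation `P ∘ φ = det Dφ · P`: since `P` is positive at
both `x` and `φ x`, the cofactor `det Dφ x` is positive and the absolute value drops out.
-/

open MeasureTheory

theorem MeasureTheory.setLIntegral_image_eq_of_abs_det_fderiv_mul_comp_eq
    {E : Type*} [NormedAddCommGroup E] [NormedSpace ℝ E] [FiniteDimensional ℝ E]
    [MeasurableSpace E] [BorelSpace E] (μ : Measure E) [μ.IsAddHaarMeasure]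
    {f : E → E} {f' : E → E →L[ℝ] E} {s : Set E} (hs : MeasurableSet s)
    (hf' : ∀ x ∈ s, HasFDerivWithinAt f (f' x) s x) (hf : Set.InjOn f s) {g : E → ENNReal}
    (hg : ∀ x ∈ s, ENNReal.ofReal |(f' x).det| * g (f x) = g x) :
    ∫⁻ x in f '' s, g x ∂μ = ∫⁻ x in s, g x ∂μ := by
  rw [lintegral_image_eq_lintegral_abs_det_fderiv_mul μ hs hf' hf]
  exact setLIntegral_congr_fun hs hg

theorem ENNReal.ofReal_abs_mul_ofReal_one_div_eq_of_eq_mul {d p q : ℝ} (hp : 0 < p)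
    (hq : 0 < q) (h : q = d * p) :
    ENNReal.ofReal |d| * ENNReal.ofReal (1 / q) = ENNReal.ofReal (1 / p) := by
  have hd : 0 < d := pos_of_mul_pos_left (h ▸ hq) hp.le
  rw [abs_of_pos hd, ← ENNReal.ofReal_mul hd.le, h]
  congr 1
  field_simp

theorem darboux_with_jacobian_cofactor_gives_preserved_measure_general
    (n : ℕ) (U : Set (Fin n → ℝ))
    (φ : (Fin n → ℝ) → (Fin n → ℝ))
    (hinj : Set.InjOn φ U) (hmaps : Set.MapsTo φ U U)
    (φ' : (Fin n → ℝ) → ((Fin n → ℝ) →L[ℝ] (Fin n → ℝ)))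
    (hdiff : ∀ x ∈ U, HasFDerivAt φ (φ' x) x)
    (P : (Fin n → ℝ) → ℝ)
    (hPpos : ∀ x ∈ U, 0 < P x)
    (hDarb : ∀ x ∈ U, P (φ x) = (φ' x).det * P x)
    (s : Set (Fin n → ℝ)) (hs : MeasurableSet s) (hsU : s ⊆ U) :
    ∫⁻ x in φ '' s, ENNReal.ofReal (1 / P x) = ∫⁻ x in s, ENNReal.ofReal (1 / P x) := by
  refine setLIntegral_image_eq_of_abs_det_fderiv_mul_comp_eq volume hs
    (fun x hx => (hdiff x (hsU hx)).hasFDerivWithinAt) (hinj.mono hsU) fun x hx => ?_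
  exact ENNReal.ofReal_abs_mul_ofReal_one_div_eq_of_eq_mul (hPpos x (hsU hx))
    (hPpos (φ x) (hmaps (hsU hx))) (hDarb x (hsU hx))

/-- A discrete Darboux "polynomial" whose cofactor equals the Jacobian
determinant of the map is the inverse density of a preserved measure:
if `P ∘ φ = det(Dφ) · P` on an open set `U`, then the measure with density
`1/P` with respect to Lebesgue measure is preserved by `φ`. -/
theorem darboux_with_jacobian_cofactor_gives_preserved_measure
    (n : ℕ) (U : Set (Fin n → ℝ)) (hU : IsOpen U)
    (φ : (Fin n → ℝ) → (Fin n → ℝ))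
    (hinj : Set.InjOn φ U) (hmaps : Set.MapsTo φ U U)
    (φ' : (Fin n → ℝ) → ((Fin n → ℝ) →L[ℝ] (Fin n → ℝ)))
    (hdiff : ∀ x ∈ U, HasFDerivAt φ (φ' x) x)
    (P : (Fin n → ℝ) → ℝ)
    (hPcont : Continuous P) (hPpos : ∀ x ∈ U, 0 < P x)
    (hDarb : ∀ x ∈ U, P (φ x) = (φ' x).det * P x)
    (s : Set (Fin n → ℝ)) (hs : MeasurableSet s) (hsU : s ⊆ U) :
    ∫⁻ x in φ '' s, ENNReal.ofReal (1 / P x) = ∫⁻ x in s, ENNReal.ofReal (1 / P x) :=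
  darboux_with_jacobian_cofactor_gives_preserved_measure_general n U φ hinj hmaps φ' hdiff P hPpos
    hDarb s hs hsU
end

section
/- Let h be a real number and for (x,y) ∈ ℝ² define D(x,y) = 1 − (h²/4)(9 − 12x − 36y + 4x² + 12xy + 36y²), x' = x(1 + h(x+6y−3) + (h²/4)(9−6x))/D(x,y) and y' = y(1 + h(3−2x−3y) + (9h²/4)(1−2y))/D(x,y). Then for all (x,y) with D(x,y) ≠ 0 and D(x',y') ≠ 0, x'y'(x'+3y'−3)/D(x',y') = xy(x+3y−3)/D(x,y); i.e. the rational function Ĩ(x,y) = xy(x+3y−3)/D(x,y) is a first integral of the Kahan map. -/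
/-!
Clearing the common denominator `E = D(x,y)` of the Kahan map, the image point is `(A/E, B/E)` with
polynomial numerators `A, B`, and `E² D(A/E, B/E)` is the homogenisation `D̂(A,B,E)` of `D`. The
whole statement then reduces to the polynomial identity
`A B (A + 3B − 3E) = x y (x + 3y − 3) · D̂(A,B,E)`,
since the numerator of the invariant at the image carries one more factor of `E` than its
denominator.
-/

namespace Kahan

variable {K : Type*} [Field K] [CharZero K]

def denom (h a b : K) : K :=
  1 - h ^ 2 / 4 * (9 - 12 * a - 36 * b + 4 * a ^ 2 + 12 * a * b + 36 * b ^ 2)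

def denomHom (h a b e : K) : K :=
  e ^ 2 - h ^ 2 / 4 * (9 * e ^ 2 - 12 * a * e - 36 * b * e + 4 * a ^ 2 + 12 * a * b + 36 * b ^ 2)

def numX (h x y : K) : K := x * (1 + h * (x + 6 * y - 3) + h ^ 2 / 4 * (9 - 6 * x))

def numY (h x y : K) : K := y * (1 + h * (3 - 2 * x - 3 * y) + 9 * h ^ 2 / 4 * (1 - 2 * y))

def invariant (h a b : K) : K := a * b * (a + 3 * b - 3) / denom h a b

omit [CharZero K] in
theorem denom_div_div (h a b : K) {e : K} (he : e ≠ 0) :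
    denom h (a / e) (b / e) = denomHom h a b e / e ^ 2 := by
  unfold denom denomHom
  field_simp

theorem numX_mul_numY_mul_cubic (h x y : K) :
    numX h x y * numY h x y * (numX h x y + 3 * numY h x y - 3 * denom h x y) =
      x * y * (x + 3 * y - 3) * denomHom h (numX h x y) (numY h x y) (denom h x y) := by
  unfold numX numY denom denomHom
  ring

theorem invariant_map (h x y : K) (hE : denom h x y ≠ 0)
    (hE' : denom h (numX h x y / denom h x y) (numY h x y / denom h x y) ≠ 0) :
    invariant h (numX h x y / denom h x y) (numY h x y / denom h x y) = invariant h x y := by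
  set A := numX h x y
  set B := numY h x y
  set E := denom h x y
  rw [denom_div_div h A B hE] at hE'
  have hP : denomHom h A B E ≠ 0 := fun hP => hE' (by rw [hP, zero_div])
  calc invariant h (A / E) (B / E)
      = A * B * (A + 3 * B - 3 * E) / (E * denomHom h A B E) := by
        rw [invariant, denom_div_div h A B hE]
        field_simp
    _ = x * y * (x + 3 * y - 3) * denomHom h A B E / (E * denomHom h A B E) := by
        rw [numX_mul_numY_mul_cubic]
    _ = invariant h x y := mul_div_mul_right _ _ hP

end Kahan

/-- The rational function `Ĩ(x,y) = x y (x + 3y − 3)/D(x,y)` is a first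
integral of the Kahan map of the ODE `ẋ = x(x+6y−3)`, `ẏ = y(−3y−2x+3)`. -/
theorem kahan_map_first_integral_2d
    (h x y : ℝ) (D : ℝ → ℝ → ℝ)
    (hD : ∀ a b : ℝ, D a b =
      1 - h ^ 2 / 4 * (9 - 12 * a - 36 * b + 4 * a ^ 2 + 12 * a * b + 36 * b ^ 2))
    (x' y' : ℝ)
    (hx' : x' = x * (1 + h * (x + 6 * y - 3) + h ^ 2 / 4 * (9 - 6 * x)) / D x y)
    (hy' : y' = y * (1 + h * (3 - 2 * x - 3 * y) + 9 * h ^ 2 / 4 * (1 - 2 * y)) / D x y)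
    (hD₁ : D x y ≠ 0) (hD₂ : D x' y' ≠ 0) :
    x' * y' * (x' + 3 * y' - 3) / D x' y' = x * y * (x + 3 * y - 3) / D x y := by
  obtain rfl : D = Kahan.denom h := funext₂ hD
  subst hx' hy'
  exact Kahan.invariant_map h x y hD₁ hD₂
end

section
/- Let h be a real number, let D(x,y) = 1 − (h²/4)(9 − 12x − 36y + 4x² + 12xy + 36y²), and let φ(x,y) = (x',y') with x' = x(1 + h(x+6y−3) + (h²/4)(9−6x))/D(x,y) and y' = y(1 + h(3−2x−3y) + (9h²/4)(1−2y))/D(x,y). Then for all (x,y) with D(x,y) ≠ 0, the Jacobian determinant of φ satisfies det(Dφ(x,y))·D(x,y) = D(φ(x,y)); consequently the map φ preserves the measure dx dy / D(x,y). -/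
/-!
The Kahan map is `φ = (N₁ / D, N₂ / D)` with `N₁, N₂, D` quadratic polynomials. For any map of
this form, `det Dφ · D³` is the `3 × 3` determinant with rows `(D, N₁, N₂)`, `∂ₓ(D, N₁, N₂)`,
`∂ᵧ(D, N₁, N₂)`. For the Kahan map this determinant is the polynomial `D² · D(N₁ / D, N₂ / D)`,
the homogenization of `D` evaluated at `(D, N₁, N₂)`; dividing by `D²` gives `det Dφ · D = D ∘ φ`.
-/

open ContinuousLinearMap

section

variable {𝕜 : Type*} [NontriviallyNormedField 𝕜]

theorem ContinuousLinearMap.det_prod_eq (L : 𝕜 × 𝕜 →L[𝕜] 𝕜 × 𝕜) :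
    L.det = (L (1, 0)).1 * (L (0, 1)).2 - (L (1, 0)).2 * (L (0, 1)).1 := by
  rw [ContinuousLinearMap.det, ← LinearMap.det_toMatrix (Module.Basis.finTwoProd 𝕜),
    Matrix.det_fin_two]
  simp [LinearMap.toMatrix_apply, mul_comm]

theorem det_fderiv_div_eq_det_div_pow_three {N₁ N₂ d : 𝕜 × 𝕜 → 𝕜} {n₁ n₂ δ : 𝕜 × 𝕜 →L[𝕜] 𝕜}
    {p : 𝕜 × 𝕜} (h₁ : HasFDerivAt N₁ n₁ p) (h₂ : HasFDerivAt N₂ n₂ p) (hd : HasFDerivAt d δ p)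
    (hdp : d p ≠ 0) :
    (fderiv 𝕜 (fun q ↦ (N₁ q / d q, N₂ q / d q)) p).det =
      !![d p, N₁ p, N₂ p; δ (1, 0), n₁ (1, 0), n₂ (1, 0); δ (0, 1), n₁ (0, 1), n₂ (0, 1)].det /
        d p ^ 3 := by
  rw [eq_div_iff (pow_ne_zero 3 hdp)]
  have hinv : HasFDerivAt (fun q ↦ (d q)⁻¹) _ p := (hasFDerivAt_inv hdp).comp p hd
  simp only [div_eq_mul_inv]
  rw [((h₁.fun_mul hinv).prodMk (h₂.fun_mul hinv)).fderiv, det_prod_eq, Matrix.det_fin_three]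
  simp only [prod_apply, add_apply, smul_apply, comp_apply, toSpanSingleton_apply, smul_eq_mul,
    Matrix.of_apply, Matrix.cons_val', Matrix.cons_val_zero, Matrix.cons_val_fin_one,
    Matrix.cons_val_one, Matrix.cons_val]
  field_simp
  ring

def bivariateQuadratic (a b c d e f : 𝕜) (q : 𝕜 × 𝕜) : 𝕜 :=
  a + b * q.1 + c * q.2 + d * q.1 ^ 2 + e * q.1 * q.2 + f * q.2 ^ 2

theorem hasFDerivAt_bivariateQuadratic (a b c d e f : 𝕜) (p : 𝕜 × 𝕜) :
    HasFDerivAt (bivariateQuadratic a b c d e f)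
      ((b + 2 * d * p.1 + e * p.2) • fst 𝕜 𝕜 𝕜 + (c + e * p.1 + 2 * f * p.2) • snd 𝕜 𝕜 𝕜) p := by
  have hx : HasFDerivAt (fun q : 𝕜 × 𝕜 ↦ q.1) (fst 𝕜 𝕜 𝕜) p := hasFDerivAt_fst
  have hy : HasFDerivAt (fun q : 𝕜 × 𝕜 ↦ q.2) (snd 𝕜 𝕜 𝕜) p := hasFDerivAt_snd
  refine (((((((hasFDerivAt_const a p).add (hx.const_mul b)).add (hy.const_mul c)).add
    ((hx.pow 2).const_mul d)).add ((hx.const_mul e).mul hy)).add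
    ((hy.pow 2).const_mul f))).congr_fderiv ?_
  ext <;>
    simp only [zero_add, Nat.add_one_sub_one, pow_one, nsmul_eq_mul, Nat.cast_ofNat, add_comp,
      smul_comp, fst_comp_inl, snd_comp_inl, fst_comp_inr, snd_comp_inr, smul_zero, add_zero,
      add_apply, smul_apply, id_apply, smul_eq_mul, mul_one] <;> ring

end

noncomputable def kahanDen (h : ℝ) : ℝ × ℝ → ℝ :=
  bivariateQuadratic (1 - 9 * h ^ 2 / 4) (3 * h ^ 2) (9 * h ^ 2) (-h ^ 2) (-3 * h ^ 2) (-9 * h ^ 2)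

noncomputable def kahanNum₁ (h : ℝ) : ℝ × ℝ → ℝ :=
  bivariateQuadratic 0 (1 - 3 * h + 9 * h ^ 2 / 4) 0 (h - 3 * h ^ 2 / 2) (6 * h) 0

noncomputable def kahanNum₂ (h : ℝ) : ℝ × ℝ → ℝ :=
  bivariateQuadratic 0 0 (1 + 3 * h + 9 * h ^ 2 / 4) 0 (-2 * h) (-3 * h - 9 * h ^ 2 / 2)

theorem kahanDen_apply (h : ℝ) (q : ℝ × ℝ) : kahanDen h q =
    1 - h ^ 2 / 4 * (9 - 12 * q.1 - 36 * q.2 + 4 * q.1 ^ 2 + 12 * q.1 * q.2 + 36 * q.2 ^ 2) := by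
  simp only [kahanDen, bivariateQuadratic]
  ring

theorem kahanNum₁_apply (h : ℝ) (q : ℝ × ℝ) :
    kahanNum₁ h q = q.1 * (1 + h * (q.1 + 6 * q.2 - 3) + h ^ 2 / 4 * (9 - 6 * q.1)) := by
  simp only [kahanNum₁, bivariateQuadratic]
  ring

theorem kahanNum₂_apply (h : ℝ) (q : ℝ × ℝ) :
    kahanNum₂ h q = q.2 * (1 + h * (3 - 2 * q.1 - 3 * q.2) + 9 * h ^ 2 / 4 * (1 - 2 * q.2)) := by
  simp only [kahanNum₂, bivariateQuadratic]
  ring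

/-- The Kahan map `φ` of the ODE `ẋ = x(x+6y−3)`, `ẏ = y(−3y−2x+3)` satisfies
`det(Dφ(x,y)) · D(x,y) = D(φ(x,y))` wherever `D(x,y) ≠ 0`; consequently `φ`
preserves the measure `dx dy / D(x,y)`. -/
theorem kahan_map_preserves_measure_2d
    (h : ℝ) (D : ℝ → ℝ → ℝ)
    (hD : ∀ a b : ℝ, D a b =
      1 - h ^ 2 / 4 * (9 - 12 * a - 36 * b + 4 * a ^ 2 + 12 * a * b + 36 * b ^ 2))
    (φ : ℝ × ℝ → ℝ × ℝ)
    (hφ : ∀ p : ℝ × ℝ, φ p =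
      (p.1 * (1 + h * (p.1 + 6 * p.2 - 3) + h ^ 2 / 4 * (9 - 6 * p.1)) / D p.1 p.2,
       p.2 * (1 + h * (3 - 2 * p.1 - 3 * p.2) + 9 * h ^ 2 / 4 * (1 - 2 * p.2)) / D p.1 p.2))
    (p : ℝ × ℝ) (hDp : D p.1 p.2 ≠ 0) :
    (fderiv ℝ φ p).det * D p.1 p.2 = D (φ p).1 (φ p).2 := by
  have hD' (q : ℝ × ℝ) : D q.1 q.2 = kahanDen h q := by rw [hD, kahanDen_apply]
  have hφ' : φ = fun q ↦ (kahanNum₁ h q / kahanDen h q, kahanNum₂ h q / kahanDen h q) :=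
    funext fun q ↦ by rw [hφ, hD', kahanNum₁_apply, kahanNum₂_apply]
  rw [hD'] at hDp
  rw [hD (φ p).1, hφ', hD', det_fderiv_div_eq_det_div_pow_three (N₁ := kahanNum₁ h)
    (N₂ := kahanNum₂ h) (d := kahanDen h) (hasFDerivAt_bivariateQuadratic ..)
    (hasFDerivAt_bivariateQuadratic ..) (hasFDerivAt_bivariateQuadratic ..) hDp]
  simp only [Matrix.det_fin_three, Matrix.of_apply, Matrix.cons_val', Matrix.cons_val_zero,
    Matrix.cons_val_fin_one, Matrix.cons_val_one, Matrix.cons_val, add_apply, smul_apply,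
    coe_fst', coe_snd', smul_eq_mul]
  field_simp
  rw [kahanDen_apply, kahanNum₁_apply, kahanNum₂_apply]
  ring
end

section
/- Let h be a real number, let D(x,y) = 1 − (h²/4)(9 − 12x − 36y + 4x² + 12xy + 36y²), and let x' = x(1 + h(x+6y−3) + (h²/4)(9−6x))/D(x,y), y' = y(1 + h(3−2x−3y) + (9h²/4)(1−2y))/D(x,y). Then for all (x,y) with D(x,y) ≠ 0 and x + 3y − 3 = 0, one has x' + 3y' − 3 = 0; i.e. the affine polynomial x + 3y − 3 is a discrete Darboux polynomial of the Kahan map and the line x + 3y = 3 is invariant. -/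
/-!
Clearing the common denominator, `D · (x' + 3y' − 3)` is a polynomial that factors as
`(x + 3y − 3) · (1 + h(x − 3y) + (3h²/4)(2x + 6y − 3))`: order by order in `h` the
coefficients are `x + 3y − 3`, `(x − 3y)(x + 3y − 3)` and `3(2s − 3)(s − 3)` with `s = x + 3y`.
So `x + 3y − 3` is a Darboux polynomial of the Kahan map, and it vanishes at the image
whenever it vanishes at the point.
-/

theorem kahan_line_darboux {h x y d : ℝ}
    (hd : d = 1 - h ^ 2 / 4 * (9 - 12 * x - 36 * y + 4 * x ^ 2 + 12 * x * y + 36 * y ^ 2))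
    (hd₀ : d ≠ 0) :
    x * (1 + h * (x + 6 * y - 3) + h ^ 2 / 4 * (9 - 6 * x)) / d
        + 3 * (y * (1 + h * (3 - 2 * x - 3 * y) + 9 * h ^ 2 / 4 * (1 - 2 * y)) / d) - 3
      = (1 + h * (x - 3 * y) + 3 * h ^ 2 / 4 * (2 * x + 6 * y - 3)) / d * (x + 3 * y - 3) := by
  field_simp
  rw [hd]
  ring

/-- The affine polynomial `x + 3y − 3` is a discrete Darboux polynomial of the
Kahan map of the ODE `ẋ = x(x+6y−3)`, `ẏ = y(−3y−2x+3)`: the line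
`x + 3y = 3` is invariant under the map. -/
theorem kahan_map_invariant_line_2d
    (h x y : ℝ) (D : ℝ → ℝ → ℝ)
    (hD : ∀ a b : ℝ, D a b =
      1 - h ^ 2 / 4 * (9 - 12 * a - 36 * b + 4 * a ^ 2 + 12 * a * b + 36 * b ^ 2))
    (x' y' : ℝ)
    (hx' : x' = x * (1 + h * (x + 6 * y - 3) + h ^ 2 / 4 * (9 - 6 * x)) / D x y)
    (hy' : y' = y * (1 + h * (3 - 2 * x - 3 * y) + 9 * h ^ 2 / 4 * (1 - 2 * y)) / D x y)
    (hD₁ : D x y ≠ 0) (hline : x + 3 * y - 3 = 0) :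
    x' + 3 * y' - 3 = 0 := by
  rw [hx', hy', kahan_line_darboux (hD x y) hD₁, hline, mul_zero]
end

section
/- For the polynomial vector field f(x,y) = (x(x+6y−3), y(−3y−2x+3)) on ℝ², the three affine polynomials P₁ = x+3y−3, P₂ = x, P₃ = y are Darboux polynomials with cofactors C₁ = x−3y, C₂ = x+6y−3, C₃ = 3−2x−3y respectively; that is, as polynomial identities: f₁·∂P₁/∂x + f₂·∂P₁/∂y = (x−3y)(x+3y−3), f₁·∂P₂/∂x + f₂·∂P₂/∂y = (x+6y−3)·x, and f₁·∂P₃/∂x + f₂·∂P₃/∂y = (3−2x−3y)·y. -/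
open MvPolynomial

theorem Derivation.map_ofNat {R A M : Type*} [CommSemiring R] [CommSemiring A] [Algebra R A]
    [AddCommMonoid M] [Module A M] [Module R M] (D : Derivation R A M) (n : ℕ) [n.AtLeastTwo] :
    D (no_index (OfNat.ofNat n : A)) = 0 := by
  rw [← Nat.cast_ofNat, D.map_natCast]

/-- For the vector field `f(x,y) = (x(x+6y−3), y(−3y−2x+3))` on `ℝ²`, the three
affine polynomials `x+3y−3`, `x`, `y` are Darboux polynomials with cofactors
`x−3y`, `x+6y−3`, `3−2x−3y` respectively. -/
theorem affine_darboux_polynomials_of_planar_ode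
    (x y f₁ f₂ : MvPolynomial (Fin 2) ℝ)
    (hx : x = X 0) (hy : y = X 1)
    (hf₁ : f₁ = x * (x + 6 * y - 3))
    (hf₂ : f₂ = y * (-3 * y - 2 * x + 3)) :
    (f₁ * pderiv 0 (x + 3 * y - 3) + f₂ * pderiv 1 (x + 3 * y - 3)
        = (x - 3 * y) * (x + 3 * y - 3)) ∧
    (f₁ * pderiv 0 x + f₂ * pderiv 1 x = (x + 6 * y - 3) * x) ∧
    (f₁ * pderiv 0 y + f₂ * pderiv 1 y = (3 - 2 * x - 3 * y) * y) := by
  subst hx hy hf₁ hf₂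
  refine ⟨?_, ?_, ?_⟩ <;>
    simp only [map_add, map_sub, Derivation.leibniz, Derivation.map_ofNat, pderiv_X, smul_eq_mul,
      Pi.single_apply, Fin.reduceEq, ↓reduceIte] <;>
    ring
end

section
/- Let h, μ, λ, x, y, z, x', y', z' be real numbers satisfying the Kahan–Hirota–Kimura equations (x'−x)/h = (x'(y−μz) + x(y'−μz'))/2, (y'−y)/h = (y'(λz−x) + y(λz'−x'))/2, (z'−z)/h = (z'(μx−λy) + z(μx'−λy'))/2 (with h ≠ 0). Then x' + y' + z' = x + y + z; i.e. for all parameter values (μ,λ) the Kahan map of the ODE ẋ = x(y−μz), ẏ = y(λz−x), ż = z(μx−λy) preserves the first integral x + y + z. -/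
/-!
The components of the vector field `x(y−μz)`, `y(λz−x)`, `z(μx−λy)` sum to zero identically,
and so do those of its symmetric polarization, which forms the right-hand sides of the Kahan
equations. Adding the three equations therefore gives `((x'+y'+z') − (x+y+z))/h = 0`.
-/

theorem kahan_polarization_sum_eq_zero (μ lam x y z x' y' z' : ℝ) :
    (x' * (y - μ * z) + x * (y' - μ * z')) + (y' * (lam * z - x) + y * (lam * z' - x'))
      + (z' * (μ * x - lam * y) + z * (μ * x' - lam * y')) = 0 := by
  ring

/-- For all parameter values `(μ, λ)`, the Kahan map of the ODE
`ẋ = x(y−μz)`, `ẏ = y(λz−x)`, `ż = z(μx−λy)` preserves the first integral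
`x + y + z`. -/
theorem kahan_map_preserves_linear_integral_3d
    (h μ lam x y z x' y' z' : ℝ) (hh : h ≠ 0)
    (e1 : (x' - x) / h = (x' * (y - μ * z) + x * (y' - μ * z')) / 2)
    (e2 : (y' - y) / h = (y' * (lam * z - x) + y * (lam * z' - x')) / 2)
    (e3 : (z' - z) / h = (z' * (μ * x - lam * y) + z * (μ * x' - lam * y')) / 2) :
    x' + y' + z' = x + y + z := by
  have hsum : ((x' + y' + z') - (x + y + z)) / h = 0 :=
    calc ((x' + y' + z') - (x + y + z)) / h = (x' - x) / h + (y' - y) / h + (z' - z) / h := by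
          ring
      _ = 0 := by
          rw [e1, e2, e3, ← add_div, ← add_div, kahan_polarization_sum_eq_zero, zero_div]
  exact sub_eq_zero.mp ((div_eq_zero_iff.mp hsum).resolve_right hh)
end

section
/- Let h, x, y, z, x', y', z' be real numbers satisfying the Kahan–Hirota–Kimura equations with parameters (μ,λ) = (1,1) (and h ≠ 0): (x'−x)/h = (x'(y−z) + x(y'−z'))/2, (y'−y)/h = (y'(z−x) + y(z'−x'))/2, (z'−z)/h = (z'(x−y) + z(x'−y'))/2. Then, writing Q(x,y,z) = x² + y² + z² − 2xy − 2xz − 2yz, one has x'y'z'·(1 − (h²/4)Q(x,y,z)) = xyz·(1 − (h²/4)Q(x',y',z')); i.e. the rational function xyz/(1 − (h²/4)(x²+y²+z²−2xy−2xz−2yz)) is an additional first integral of the Kahan map for (μ,λ) = (1,1). -/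
/-!
The Kahan equations are linear in the new point; solving them by Cramer's rule gives
`D · x' = x · N(x, y, z)` and its cyclic rotations, where `D = 4 − h² Q(x, y, z)` and `N` is an
explicit quadratic polynomial. Substituting these into `Q(x', y', z')` and using the polynomial identity
`N(x, y, z) N(y, z, x) N(z, x, y) = 4 D² − h² Q(x N, y N, z N)` yields
`x' y' z' · D³ = x y z · D² · D'`, where `D' = 4 − h² Q(x', y', z')`. The Kahan map is reversible:
swapping the two points and replacing `h` by `−h` gives again a Kahan step, with the same `D` and `D'`.
Hence also `x y z · D'³ = x' y' z' · D'² · D`, and the two identities together give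
`x' y' z' · D = x y z · D'` even where `D` or `D'` vanishes.
-/

section CommRing

variable {R : Type*} [CommRing R]

def lvQuadratic (x y z : R) : R :=
  x ^ 2 + y ^ 2 + z ^ 2 - 2 * x * y - 2 * x * z - 2 * y * z

def kahanDenominator (h x y z : R) : R :=
  4 - h ^ 2 * lvQuadratic x y z

def kahanNumerator (h x y z : R) : R :=
  4 + 4 * h * (y - z) + h ^ 2 * ((y + z) ^ 2 - x ^ 2)

/-- The first Kahan equation with denominators cleared; the other two are its cyclic rotations. -/
def KahanEq (h x y z x' y' z' : R) : Prop :=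
  2 * (x' - x) = h * (x' * (y - z) + x * (y' - z'))

def IsKahanStep (h x y z x' y' z' : R) : Prop :=
  KahanEq h x y z x' y' z' ∧ KahanEq h y z x y' z' x' ∧ KahanEq h z x y z' x' y'

theorem kahanDenominator_rotate (h x y z : R) :
    kahanDenominator h y z x = kahanDenominator h x y z := by
  unfold kahanDenominator lvQuadratic
  ring

theorem kahanDenominator_neg (h x y z : R) :
    kahanDenominator (-h) x y z = kahanDenominator h x y z := by
  unfold kahanDenominator
  ring

theorem kahanNumerator_mul_mul (h x y z : R) :
    kahanNumerator h x y z * kahanNumerator h y z x * kahanNumerator h z x y =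
      4 * kahanDenominator h x y z ^ 2 - h ^ 2 * lvQuadratic (x * kahanNumerator h x y z)
        (y * kahanNumerator h y z x) (z * kahanNumerator h z x y) := by
  unfold kahanNumerator kahanDenominator lvQuadratic
  ring

namespace IsKahanStep

variable {h x y z x' y' z' : R}

theorem rotate (hs : IsKahanStep h x y z x' y' z') : IsKahanStep h y z x y' z' x' :=
  ⟨hs.2.1, hs.2.2, hs.1⟩

theorem reverse (hs : IsKahanStep h x y z x' y' z') : IsKahanStep (-h) x' y' z' x y z := by
  obtain ⟨e₁, e₂, e₃⟩ := hs
  unfold IsKahanStep KahanEq at *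
  exact ⟨by linear_combination -e₁, by linear_combination -e₂, by linear_combination -e₃⟩

end IsKahanStep

end CommRing

namespace IsKahanStep

variable {K : Type*} [Field K] [CharZero K] {h x y z x' y' z' : K}

theorem kahanDenominator_mul_fst (hs : IsKahanStep h x y z x' y' z') :
    kahanDenominator h x y z * x' = x * kahanNumerator h x y z := by
  obtain ⟨e₁, e₂, e₃⟩ := hs
  unfold KahanEq at *
  unfold kahanDenominator kahanNumerator lvQuadratic
  linear_combination (2 + h * (y - z) + h ^ 2 * x * (y + z - x) / 2) * e₁ +
    (h * x + h ^ 2 * x * (y + z - x) / 2) * e₂ + (-h * x + h ^ 2 * x * (y + z - x) / 2) * e₃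

theorem mul_mul_mul_kahanDenominator_pow_three (hs : IsKahanStep h x y z x' y' z') :
    x' * y' * z' * kahanDenominator h x y z ^ 3 =
      x * y * z * kahanDenominator h x y z ^ 2 * kahanDenominator h x' y' z' := by
  have hx := hs.kahanDenominator_mul_fst
  have hy := hs.rotate.kahanDenominator_mul_fst
  have hz := hs.rotate.rotate.kahanDenominator_mul_fst
  rw [kahanDenominator_rotate] at hy
  rw [kahanDenominator_rotate, kahanDenominator_rotate] at hz
  set D := kahanDenominator h x y z
  calc x' * y' * z' * D ^ 3 = (D * x') * (D * y') * (D * z') := by ring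
    _ = x * y * z * (kahanNumerator h x y z * kahanNumerator h y z x * kahanNumerator h z x y) := by
      rw [hx, hy, hz]; ring
    _ = x * y * z * (4 * D ^ 2 - h ^ 2 * lvQuadratic (D * x') (D * y') (D * z')) := by
      rw [kahanNumerator_mul_mul, hx, hy, hz]
    _ = x * y * z * D ^ 2 * kahanDenominator h x' y' z' := by
      unfold kahanDenominator lvQuadratic; ring

theorem mul_mul_mul_kahanDenominator (hs : IsKahanStep h x y z x' y' z') :
    x' * y' * z' * kahanDenominator h x y z = x * y * z * kahanDenominator h x' y' z' := by
  have fwd := hs.mul_mul_mul_kahanDenominator_pow_three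
  have bwd := hs.reverse.mul_mul_mul_kahanDenominator_pow_three
  rw [kahanDenominator_neg, kahanDenominator_neg] at bwd
  set D := kahanDenominator h x y z
  set D' := kahanDenominator h x' y' z'
  obtain hD | hD := eq_or_ne D 0
  · obtain hD' | hD' := eq_or_ne D' 0
    · simp [hD, hD']
    · apply mul_left_cancel₀ (pow_ne_zero 2 hD')
      linear_combination -bwd
  · apply mul_left_cancel₀ (pow_ne_zero 2 hD)
    linear_combination fwd

end IsKahanStep

/-- For `(μ, λ) = (1, 1)`, the rational function
`x y z / (1 − (h²/4)(x² + y² + z² − 2xy − 2xz − 2yz))` is an additional first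
integral of the Kahan map of the ODE `ẋ = x(y−z)`, `ẏ = y(z−x)`, `ż = z(x−y)`
(stated in cleared-denominator form). -/
theorem kahan_map_additional_integral_mu_one_lambda_one
    (h x y z x' y' z' : ℝ) (hh : h ≠ 0)
    (e1 : (x' - x) / h = (x' * (y - z) + x * (y' - z')) / 2)
    (e2 : (y' - y) / h = (y' * (z - x) + y * (z' - x')) / 2)
    (e3 : (z' - z) / h = (z' * (x - y) + z * (x' - y')) / 2) :
    x' * y' * z' *
        (1 - h ^ 2 / 4 *
          (x ^ 2 + y ^ 2 + z ^ 2 - 2 * x * y - 2 * x * z - 2 * y * z)) =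
      x * y * z *
        (1 - h ^ 2 / 4 *
          (x' ^ 2 + y' ^ 2 + z' ^ 2 - 2 * x' * y' - 2 * x' * z' - 2 * y' * z')) := by
  have cleared {a b : ℝ} (e : a / h = b / 2) : 2 * a = h * b := by
    rw [div_eq_iff hh] at e
    linear_combination 2 * e
  have hs : IsKahanStep h x y z x' y' z' := ⟨cleared e1, cleared e2, cleared e3⟩
  have key := hs.mul_mul_mul_kahanDenominator
  unfold kahanDenominator lvQuadratic at key
  linear_combination key / 4
end

section
/- Let h, x, y, z, x', y', z' be real numbers satisfying the Kahan–Hirota–Kimura equations with parameters (μ,λ) = (1,0) (and h ≠ 0): (x'−x)/h = (x'(y−z) + x(y'−z'))/2, (y'−y)/h = −(y'x + yx')/2, (z'−z)/h = (z'x + zx')/2. Then y'z'·(4 − h²x²) = yz·(4 − h²x'²); i.e. the rational function yz/(1 − (h²/4)x²) is an additional first integral of the Kahan map for (μ,λ) = (1,0). -/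
/-!
The `y`- and `z`-equations of the Kahan map are linear in `y'` and `z'`, and give
`y' (2 + h x) = y (2 - h x')` and `z' (2 - h x) = z (2 + h x')`. Multiplying them, the factors
combine into `y' z' (4 - h² x²) = y z (4 - h² x'²)`.
-/

/-- Kahan discretization of the scalar equation `ẏ = c x y`, with `x` a given function. -/
lemma kahan_linear_step {h c x x' y y' : ℝ} (hh : h ≠ 0)
    (e : (y' - y) / h = c * (y' * x + y * x') / 2) :
    y' * (2 - c * h * x) = y * (2 + c * h * x') := by
  field_simp at e
  linarith

theorem kahan_map_additional_integral_mu_one_lambda_zero_general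
    (h x y z x' y' z' : ℝ) (hh : h ≠ 0)
    (e2 : (y' - y) / h = -(y' * x + y * x') / 2)
    (e3 : (z' - z) / h = (z' * x + z * x') / 2) :
    y' * z' * (4 - h ^ 2 * x ^ 2) = y * z * (4 - h ^ 2 * x' ^ 2) := by
  have hy : y' * (2 + h * x) = y * (2 - h * x') := by
    linear_combination kahan_linear_step (c := -1) (x := x) (x' := x') hh (by rw [e2]; ring)
  have hz : z' * (2 - h * x) = z * (2 + h * x') := by
    linear_combination kahan_linear_step (c := 1) (x := x) (x' := x') hh (by rw [e3]; ring)
  linear_combination z' * (2 - h * x) * hy + y * (2 - h * x') * hz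

/-- For `(μ, λ) = (1, 0)`, the rational function `y z / (1 − (h²/4) x²)` is an
additional first integral of the Kahan map of the ODE `ẋ = x(y−z)`, `ẏ = −yx`,
`ż = zx` (stated in cleared-denominator form). -/
theorem kahan_map_additional_integral_mu_one_lambda_zero
    (h x y z x' y' z' : ℝ) (hh : h ≠ 0)
    (e1 : (x' - x) / h = (x' * (y - z) + x * (y' - z')) / 2)
    (e2 : (y' - y) / h = -(y' * x + y * x') / 2)
    (e3 : (z' - z) / h = (z' * x + z * x') / 2) :
    y' * z' * (4 - h ^ 2 * x ^ 2) = y * z * (4 - h ^ 2 * x' ^ 2) :=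
  kahan_map_additional_integral_mu_one_lambda_zero_general h x y z x' y' z' hh e2 e3
end

section
/- Let h, x, y, z, x', y', z' be real numbers satisfying the Kahan–Hirota–Kimura equations with parameters (μ,λ) = (−1,0) (and h ≠ 0): (x'−x)/h = (x'(y+z) + x(y'+z'))/2, (y'−y)/h = −(y'x + yx')/2, (z'−z)/h = −(z'x + zx')/2. If moreover 2 + hx ≠ 0, then y'·z = y·z'; i.e. the rational function y/z is an additional first integral of the Kahan map for (μ,λ) = (−1,0). -/
/-! The equations for `y` and `z` are the same linear Kahan step `(u' - u)/h = -(u' x + u x')/2`,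
which, cleared of denominators, reads `u' (2 + h x) = u (2 - h x')`. Hence `y'/y` and `z'/z` are both
`(2 - h x')/(2 + h x)`, and `y/z` is preserved. -/

lemma kahan_linear_step_cleared {h x x' u u' : ℝ} (hh : h ≠ 0)
    (e : (u' - u) / h = -(u' * x + u * x') / 2) :
    u' * (2 + h * x) = u * (2 - h * x') := by
  field_simp at e
  linear_combination e

lemma mul_eq_mul_of_common_ratio {R : Type*} [CommRing R] [IsDomain R] {a a' b b' c d : R}
    (hc : c ≠ 0) (ha : a' * c = a * d) (hb : b' * c = b * d) :
    a' * b = a * b' :=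
  mul_right_cancel₀ hc (by linear_combination b * ha - a * hb)

theorem kahan_map_additional_integral_mu_neg_one_lambda_zero_general
    (h x y z x' y' z' : ℝ) (hh : h ≠ 0)
    (e2 : (y' - y) / h = -(y' * x + y * x') / 2)
    (e3 : (z' - z) / h = -(z' * x + z * x') / 2)
    (hden : 2 + h * x ≠ 0) :
    y' * z = y * z' :=
  mul_eq_mul_of_common_ratio hden (kahan_linear_step_cleared hh e2) (kahan_linear_step_cleared hh e3)

/-- For `(μ, λ) = (−1, 0)`, the rational function `y / z` is an additional
first integral of the Kahan map of the ODE `ẋ = x(y+z)`, `ẏ = −yx`, `ż = −zx`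
(stated in cleared-denominator form). -/
theorem kahan_map_additional_integral_mu_neg_one_lambda_zero
    (h x y z x' y' z' : ℝ) (hh : h ≠ 0)
    (e1 : (x' - x) / h = (x' * (y + z) + x * (y' + z')) / 2)
    (e2 : (y' - y) / h = -(y' * x + y * x') / 2)
    (e3 : (z' - z) / h = -(z' * x + z * x') / 2)
    (hden : 2 + h * x ≠ 0) :
    y' * z = y * z' :=
  kahan_map_additional_integral_mu_neg_one_lambda_zero_general h x y z x' y' z' hh e2 e3 hden
end
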